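/- For every 𝒦 > 0 there exists a constant C > 0 depending only on 𝒦 such that the following holds. Let Φ satisfy Condition L with constant 𝒦, let h be a probability density on [0,1], let F_X be a probability measure on [0,1]^P, and let u, v : [0,1] × [0,1]^P → ℝ be bounded measurable functions. Then the F_X-integrated Kullback–Leibler divergence satisfies K(f_u, f_v) ≤ C ‖u − v‖_∞² exp(𝒦 ‖u − v‖_∞) (1 + 2𝒦 ‖u − v‖_∞). -/

import Mathlib

open MeasureTheory Real

/-! With `ε = log Φ(v) - log Φ(u)` and `N`, `Z` the normalizing integrals of `f_u`, `f_v`, the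
log-likelihood ratio of `f_u` against `f_v` is `log (Z / N) - ε`, and `Z / N = E_{f_u}[exp ε]`.
Under Condition L, `log Φ` is `𝒦`-Lipschitz, so `|ε| ≤ m := 𝒦 ‖u - v‖_∞`, and `log x ≤ x - 1`
gives `K = log E[exp ε] - E[ε] ≤ E[exp ε - 1 - ε] ≤ m² exp m` for each `x`; integrating over `x`
against `F_X` keeps this bound. -/

theorem Real.exp_le_one_add_add_sq_mul_exp_abs (s : ℝ) : exp s ≤ 1 + s + s ^ 2 * exp |s| := by
  have h1 : 1 ≤ exp |s| := one_le_exp (abs_nonneg s)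
  rcases le_total |s| 1 with hs | hs
  · have := (abs_le.mp (abs_exp_sub_one_sub_id_le hs)).2
    nlinarith
  · have hes : exp s ≤ exp |s| := exp_le_exp.mpr (le_abs_self s)
    have hsq : |s| ≤ s ^ 2 := by nlinarith [sq_abs s]
    nlinarith [neg_abs_le s]

theorem abs_log_sub_log_le_of_div_le {Φ φ : ℝ → ℝ} {K : ℝ} (hΦ : ∀ x, HasDerivAt Φ (φ x) x)
    (hmono : Monotone Φ) (hpos : ∀ x, 0 < Φ x) (hK : ∀ x, φ x / Φ x ≤ K) (s t : ℝ) :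
    |log (Φ s) - log (Φ t)| ≤ K * |s - t| := by
  have hφ : ∀ x, 0 ≤ φ x := fun x => (hΦ x).deriv ▸ hmono.deriv_nonneg
  simpa [Real.norm_eq_abs] using Convex.norm_image_sub_le_of_norm_hasDerivWithin_le
    (f := fun x => log (Φ x)) (s := Set.univ)
    (fun x _ => ((hΦ x).log (hpos x).ne').hasDerivWithinAt)
    (fun x _ => by rw [norm_of_nonneg (div_nonneg (hφ x) (hpos x).le)]; exact hK x)
    convex_univ (Set.mem_univ t) (Set.mem_univ s)

theorem setIntegral_le_of_forall_le {α : Type*} [MeasurableSpace α] {μ : Measure α}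
    [IsProbabilityMeasure μ] {s : Set α} (hs : MeasurableSet s) {f : α → ℝ} {c : ℝ} (hc : 0 ≤ c)
    (hf : ∀ x ∈ s, f x ≤ c) : ∫ x in s, f x ∂μ ≤ c := by
  by_cases hfi : IntegrableOn f s μ
  · calc ∫ x in s, f x ∂μ ≤ ∫ _ in s, c ∂μ := setIntegral_mono_on hfi integrableOn_const hs hf
      _ = μ.real s * c := setIntegral_const c
      _ ≤ c := mul_le_of_le_one_left hc measureReal_le_one
  · rw [integral_undef hfi]
    exact hc

section

variable {α : Type*} [MeasurableSpace α] {μ : Measure α}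

theorem integral_mul_log_div_le_of_abs_le {p q ε : α → ℝ} {m : ℝ} (hp : Integrable p μ)
    (hp0 : ∀ x, 0 ≤ p x) (hp_pos : 0 < ∫ x, p x ∂μ) (hε : AEStronglyMeasurable ε μ)
    (hεm : ∀ᵐ x ∂μ, |ε x| ≤ m) (hq : ∀ x, q x = p x * exp (ε x)) :
    ∫ x, p x / (∫ y, p y ∂μ) * log ((p x / ∫ y, p y ∂μ) / (q x / ∫ y, q y ∂μ)) ∂μ
      ≤ m ^ 2 * exp m := by
  set N := ∫ y, p y ∂μ
  set Z := ∫ y, q y ∂μ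
  set c := m ^ 2 * exp m
  have hpε : Integrable (fun x => p x * ε x) μ :=
    hp.mul_bdd hε (hεm.mono fun x hx => by rwa [norm_eq_abs])
  have hq_int : Integrable q μ := by
    refine (hp.mul_bdd (continuous_exp.comp_aestronglyMeasurable hε) (c := exp m) ?_).congr
      (ae_of_all _ fun x => (hq x).symm)
    filter_upwards [hεm] with x hx
    rw [norm_of_nonneg (exp_pos _).le]
    exact exp_le_exp.mpr (le_of_abs_le hx)
  have hp_add : Integrable (fun x => p x + p x * ε x) μ := hp.add hpε
  have hZ_le : Z ≤ N + ∫ x, p x * ε x ∂μ + c * N := by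
    calc Z ≤ ∫ x, (p x + p x * ε x + c * p x) ∂μ := by
          refine integral_mono_ae hq_int (hp_add.add (hp.const_mul c)) ?_
          filter_upwards [hεm] with x hx
          have hsq : ε x ^ 2 * exp |ε x| ≤ c := by
            rw [← sq_abs]
            exact mul_le_mul (pow_le_pow_left₀ (abs_nonneg _) hx 2) (exp_le_exp.mpr hx)
              (exp_pos _).le (sq_nonneg m)
          have hexp : exp (ε x) ≤ 1 + ε x + c :=
            (exp_le_one_add_add_sq_mul_exp_abs _).trans (by linarith)
          rw [hq x]
          nlinarith [mul_le_mul_of_nonneg_left hexp (hp0 x)]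
      _ = N + ∫ x, p x * ε x ∂μ + c * N := by
          rw [integral_add hp_add (hp.const_mul c), integral_add hp hpε, integral_const_mul]
  have hZ_pos : 0 < Z := by
    have : exp (-m) * N ≤ Z := by
      rw [← integral_const_mul]
      refine integral_mono_ae (hp.const_mul _) hq_int ?_
      filter_upwards [hεm] with x hx
      rw [hq x, mul_comm]
      exact mul_le_mul_of_nonneg_left (exp_le_exp.mpr (neg_le_of_abs_le hx)) (hp0 x)
    exact lt_of_lt_of_le (by positivity) this
  have hKL : ∫ x, p x / N * log ((p x / N) / (q x / Z)) ∂μ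
      = -(∫ x, p x * ε x ∂μ) / N + log (Z / N) := by
    calc ∫ x, p x / N * log ((p x / N) / (q x / Z)) ∂μ
        = ∫ x, (-(p x * ε x) / N + p x / N * log (Z / N)) ∂μ := by
          refine integral_congr_ae (ae_of_all _ fun x => ?_)
          dsimp only
          rcases eq_or_ne (p x) 0 with hx | hx
          · simp [hx]
          have : (p x / N) / (q x / Z) = exp (-ε x) * (Z / N) := by
            rw [hq x, exp_neg]
            field_simp
          rw [this, log_mul (exp_pos _).ne' (div_pos hZ_pos hp_pos).ne', log_exp]
          ring
      _ = -(∫ x, p x * ε x ∂μ) / N + log (Z / N) := by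
          have h1 : Integrable (fun x => -(p x * ε x) / N) μ := hpε.neg.div_const N
          rw [integral_add h1 ((hp.div_const N).mul_const _), integral_div,
            integral_neg, integral_mul_const, integral_div, div_self hp_pos.ne', one_mul]
  have hlog : log (Z / N) ≤ Z / N - 1 := log_le_sub_one_of_pos (div_pos hZ_pos hp_pos)
  have hratio : Z / N - 1 ≤ (∫ x, p x * ε x ∂μ) / N + c := by
    rw [sub_le_iff_le_add, div_le_iff₀ hp_pos]
    calc Z ≤ N + ∫ x, p x * ε x ∂μ + c * N := hZ_le
      _ = _ := by field_simp; ring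
  rw [hKL]
  linarith [neg_div N (∫ x, p x * ε x ∂μ)]

theorem integral_tilted_mul_log_le {Φ : ℝ → ℝ} {h a b : α → ℝ} {K M : ℝ} (hΦ : Measurable Φ)
    (hΦ0 : ∀ s, 0 < Φ s) (hΦ1 : ∀ s, Φ s ≤ 1)
    (hlip : ∀ s t, |log (Φ s) - log (Φ t)| ≤ K * |s - t|) (hK : 0 ≤ K)
    (hh : Integrable h μ) (hh0 : ∀ y, 0 ≤ h y) (hh_pos : 0 < ∫ y, h y ∂μ)
    (ha : Measurable a) (hb : Measurable b) (hab : ∀ᵐ y ∂μ, |a y - b y| ≤ M) :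
    ∫ y, h y * Φ (a y) / (∫ t, h t * Φ (a t) ∂μ) *
        log ((h y * Φ (a y) / ∫ t, h t * Φ (a t) ∂μ) / (h y * Φ (b y) / ∫ t, h t * Φ (b t) ∂μ)) ∂μ
      ≤ (K * M) ^ 2 * exp (K * M) := by
  have hp0 : ∀ y, 0 ≤ h y * Φ (a y) := fun y => mul_nonneg (hh0 y) (hΦ0 _).le
  have hp : Integrable (fun y => h y * Φ (a y)) μ :=
    hh.mul_bdd (c := 1) (hΦ.comp ha).aestronglyMeasurable
      (ae_of_all _ fun y => by rw [norm_of_nonneg (hΦ0 _).le]; exact hΦ1 _)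
  refine integral_mul_log_div_le_of_abs_le (ε := fun y => log (Φ (b y)) - log (Φ (a y))) hp hp0
    ?_ (by fun_prop) ?_ fun y => ?_
  · have hsupp : Function.support (fun y => h y * Φ (a y)) = Function.support h := by
      ext y
      simp [(hΦ0 (a y)).ne']
    rw [integral_pos_iff_support_of_nonneg hp0 hp, hsupp]
    rwa [integral_pos_iff_support_of_nonneg hh0 hh] at hh_pos
  · filter_upwards [hab] with y hy
    rw [abs_sub_comm] at hy
    exact (hlip _ _).trans (mul_le_mul_of_nonneg_left hy hK)
  · rw [exp_sub, exp_log (hΦ0 _), exp_log (hΦ0 _)]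
    field_simp [(hΦ0 (a y)).ne']

end

/-- **Kullback–Leibler bound for tilted conditional densities.**
For every `𝒦 > 0` there is a constant `C > 0` depending only on `𝒦` such that for any `Φ`
satisfying Condition L with constant `𝒦`, any density `h` on `[0,1]`, any probability measure
`F_X` on `[0,1]^P`, and bounded (by `M ≥ ‖u - v‖_∞`) measurable `u, v`, the `F_X`-integrated
Kullback–Leibler divergence satisfies `K(f_u, f_v) ≤ C M² exp(𝒦 M) (1 + 2𝒦 M)`. -/
theorem stmt9 (𝒦 : ℝ) (h𝒦 : 0 < 𝒦) :
    ∃ C : ℝ, 0 < C ∧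
      ∀ (P : ℕ) (Φ φ : ℝ → ℝ),
        (∀ x, HasDerivAt Φ (φ x) x) → StrictMono Φ →
        (∀ x, 0 < Φ x ∧ Φ x < 1) → (∀ x, φ x / Φ x ≤ 𝒦) →
      ∀ (h : ℝ → ℝ), Measurable h → (∀ y, 0 ≤ h y) →
        (∫ y in Set.Icc (0:ℝ) 1, h y) = 1 →
      ∀ (F : Measure (Fin P → ℝ)), IsProbabilityMeasure F →
      ∀ (u v : ℝ → (Fin P → ℝ) → ℝ),
        Measurable (Function.uncurry u) → Measurable (Function.uncurry v) →
      ∀ M : ℝ,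
        (∀ y ∈ Set.Icc (0:ℝ) 1, ∀ x ∈ Set.univ.pi fun _ : Fin P => Set.Icc (0:ℝ) 1,
          |u y x - v y x| ≤ M) →
      ∀ (f : (ℝ → (Fin P → ℝ) → ℝ) → ℝ → (Fin P → ℝ) → ℝ),
        f = (fun w y x => h y * Φ (w y x) / ∫ t in Set.Icc (0:ℝ) 1, h t * Φ (w t x)) →
        (∫ x in Set.univ.pi fun _ : Fin P => Set.Icc (0:ℝ) 1,
            (∫ y in Set.Icc (0:ℝ) 1, f u y x * Real.log (f u y x / f v y x)) ∂F)
          ≤ C * M ^ 2 * Real.exp (𝒦 * M) * (1 + 2 * 𝒦 * M) := by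
  refine ⟨𝒦 ^ 2, by positivity, ?_⟩
  intro P Φ φ hΦ hΦ_mono hΦ01 hφ h _ hh0 hh1 F _ u v hu hv M huv f rfl
  have hM : 0 ≤ M := (abs_nonneg _).trans
    (huv 0 ⟨le_rfl, zero_le_one⟩ 0 fun _ _ => ⟨le_rfl, zero_le_one⟩)
  have hΦ_meas : Measurable Φ :=
    (continuous_iff_continuousAt.2 fun x => (hΦ x).continuousAt).measurable
  have hlip := abs_log_sub_log_le_of_div_le hΦ hΦ_mono.monotone (fun s => (hΦ01 s).1) hφ
  have hh : IntegrableOn h (Set.Icc 0 1) := Integrable.of_integral_ne_zero (by simp [hh1])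
  calc _ ≤ (𝒦 * M) ^ 2 * exp (𝒦 * M) := by
        refine setIntegral_le_of_forall_le (MeasurableSet.univ_pi fun _ => measurableSet_Icc)
          (by positivity) fun x hx => ?_
        exact integral_tilted_mul_log_le hΦ_meas (fun s => (hΦ01 s).1) (fun s => (hΦ01 s).2.le)
          hlip h𝒦.le hh hh0 (by rw [hh1]; exact one_pos) (hu.comp measurable_prodMk_right)
          (hv.comp measurable_prodMk_right)
          (ae_restrict_of_forall_mem measurableSet_Icc fun y hy => huv y hy x hx)
    _ ≤ 𝒦 ^ 2 * M ^ 2 * exp (𝒦 * M) * (1 + 2 * 𝒦 * M) := by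
        rw [mul_pow]
        exact le_mul_of_one_le_right (by positivity) (by nlinarith)
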